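/- arXiv:1502.00917 — 2 statements merged into one kernel-verified Lean document; each statement's English description precedes it below -/
import Mathlib

section
/- Let N ≥ 2, φ^{(1)},…,φ^{(N−1)} ∈ ℝ, and let (ψ_s) be a solution of the initial-boundary value problem with data g = (g_s). Let p = (t_1,z_1,…,t_N,z_N) ∈ S̄_1, let s ∈ {−1,+1}^N, and set c_k := z_k + s_k t_k for k = 1,…,N. If c_1 ≤ c_2 ≤ ⋯ ≤ c_N, then ψ_s(p) = g_s(c_1,…,c_N). (No-collision case of the explicit solution formula.) -/
noncomputable section

/-- Sign associated with a Bool: `true ↦ +1`, `false ↦ -1`. -/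
def sgn (b : Bool) : ℝ := if b then 1 else -1

/-- `ψ` satisfies the multi-time transport equations for the sign vector `s` on the set `U`:
`∂ψ/∂t_k = s_k · ∂ψ/∂z_k` for every `k`. Points written as `x_k = (t_k, z_k)`. -/
def Transport {N : ℕ} (s : Fin N → ℝ) (U : Set (Fin N → ℝ × ℝ))
    (ψ : (Fin N → ℝ × ℝ) → ℂ) : Prop :=
  ∀ p ∈ U, ∀ k : Fin N,
    fderiv ℝ ψ p (Pi.single k ((1 : ℝ), (0 : ℝ)))
      = s k • fderiv ℝ ψ p (Pi.single k ((0 : ℝ), (1 : ℝ)))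

/-- The set `S₁` of space-like ordered configurations. -/
def S1 (N : ℕ) : Set (Fin N → ℝ × ℝ) :=
  {x | (∀ j k : Fin N, j ≠ k → ((x j).1 - (x k).1) ^ 2 < ((x j).2 - (x k).2) ^ 2) ∧
       ∀ j k : Fin N, j < k → (x j).2 < (x k).2}

/-- The coincidence set `C_{k,k+1}` inside the closure of `S₁` (0-based `k`, `k+1 < N`). -/
def Ckk (N : ℕ) (k : ℕ) (hk : k + 1 < N) : Set (Fin N → ℝ × ℝ) :=
  {x ∈ closure (S1 N) |
    (x ⟨k, Nat.lt_of_succ_lt hk⟩).1 = (x ⟨k + 1, hk⟩).1 ∧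
    (x ⟨k, Nat.lt_of_succ_lt hk⟩).2 = (x ⟨k + 1, hk⟩).2}

/-- A family `(ψ_s)` of functions (indexed by sign vectors `s : Fin N → Bool`) is a
solution of the initial-boundary value problem with phases `φ^{(k)}` and initial data
`(g_s)`, if each `ψ_s` is continuous on the closure of `S₁`, `C¹` on `S₁`, satisfies the
multi-time transport equations for `s` on `S₁`, the boundary conditions
`ψ_s = e^{iφ^{(k)}} ψ_{τ_k s}` on `C_{k,k+1}` (for `s_k = +1`, `s_{k+1} = −1`), and the
initial conditions `ψ_s(0,z₁,…,0,z_N) = g_s(z₁,…,z_N)` for `z₁ ≤ ⋯ ≤ z_N`. -/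
def IsSolution (N : ℕ) (φ : ℕ → ℝ) (g : (Fin N → Bool) → (Fin N → ℝ) → ℂ)
    (ψ : (Fin N → Bool) → (Fin N → ℝ × ℝ) → ℂ) : Prop :=
  (∀ s, ContinuousOn (ψ s) (closure (S1 N))) ∧
  (∀ s, ContDiffOn ℝ 1 (ψ s) (S1 N)) ∧
  (∀ s, Transport (fun k => sgn (s k)) (S1 N) (ψ s)) ∧
  (∀ (k : ℕ) (hk : k + 1 < N) (s : Fin N → Bool),
    s ⟨k, Nat.lt_of_succ_lt hk⟩ = true → s ⟨k + 1, hk⟩ = false →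
    ∀ p ∈ Ckk N k hk,
      ψ s p = Complex.exp (Complex.I * (φ k : ℂ)) *
        ψ (s ∘ Equiv.swap ⟨k, Nat.lt_of_succ_lt hk⟩ ⟨k + 1, hk⟩) p) ∧
  (∀ s, ∀ z : Fin N → ℝ, (∀ i j : Fin N, i ≤ j → z i ≤ z j) →
    ψ s (fun k => ((0 : ℝ), z k)) = g s z)


/-!
Along the characteristic directions `(a_k, -s_k a_k)` the transport equations say that `ψ_s`
has zero directional derivative, and `p` differs from the initial point `(0, c)` by such a
direction. Written as `|t_j - t_k| < z_k - z_j` for `j < k`, the set `S₁` is open and convex,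
and `(0, c)` lies in its closure when `c` is nondecreasing. On an open convex set a function
with vanishing directional derivative is constant along that direction; pushing both points
slightly towards an interior point extends this, by continuity, to the closure.
-/

open Set Filter Topology

section DirectionalConstancy

variable {E F : Type*} [NormedAddCommGroup E] [NormedSpace ℝ E]
  [NormedAddCommGroup F] [NormedSpace ℝ F] {S : Set E} {f : E → F} {v : E}

theorem Convex.apply_add_eq_of_fderiv_apply_eq_zero (hS : Convex ℝ S) (hSo : IsOpen S)
    (hf : DifferentiableOn ℝ f S) (hv : ∀ z ∈ S, fderiv ℝ f z v = 0)
    {x : E} (hx : x ∈ S) (hxv : x + v ∈ S) : f (x + v) = f x := by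
  have hseg : ∀ l ∈ Icc (0 : ℝ) 1, x + l • v ∈ S := fun l hl => hS.add_smul_mem hx hxv hl
  have hderiv : ∀ l ∈ Icc (0 : ℝ) 1, HasDerivAt (fun l : ℝ => f (x + l • v)) 0 l := by
    intro l hl
    have hfx := (hf.differentiableAt (hSo.mem_nhds (hseg l hl))).hasFDerivAt
    have hline : HasDerivAt (fun l : ℝ => x + l • v) v l := by
      simpa using ((hasDerivAt_id l).smul_const v).const_add x
    simpa [Function.comp_def, hv _ (hseg l hl)] using hfx.comp_hasDerivAt l hline
  simpa using constant_of_has_deriv_right_zero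
    (fun l hl => (hderiv l hl).continuousAt.continuousWithinAt)
    (fun l hl => (hderiv l (Ico_subset_Icc_self hl)).hasDerivWithinAt) 1 (by simp)

theorem Convex.apply_add_eq_of_fderiv_apply_eq_zero_of_mem_closure (hS : Convex ℝ S)
    (hSo : IsOpen S) (hf : DifferentiableOn ℝ f S) (hfc : ContinuousOn f (closure S))
    (hv : ∀ z ∈ S, fderiv ℝ f z v = 0) {x : E} (hx : x ∈ closure S)
    (hxv : x + v ∈ closure S) : f (x + v) = f x := by
  obtain ⟨e, he⟩ : S.Nonempty := closure_nonempty_iff.1 ⟨x, hx⟩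
  have hmem : ∀ y ∈ closure S, ∀ ε ∈ Ioc (0 : ℝ) 1, y + ε • (e - y) ∈ S := fun y hy ε hε => by
    simpa [hSo.interior_eq] using hS.add_smul_sub_mem_interior' hy (hSo.interior_eq.symm ▸ he) hε
  have hlim : ∀ y ∈ closure S, Tendsto (fun ε : ℝ => f (y + ε • (e - y))) (𝓝[>] 0) (𝓝 (f y)) := by
    intro y hy
    have hto : Tendsto (fun ε : ℝ => y + ε • (e - y)) (𝓝[>] 0) (𝓝 y) :=
      (Continuous.tendsto' (by fun_prop) 0 y (by simp)).mono_left nhdsWithin_le_nhds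
    refine (hfc y hy).tendsto.comp (tendsto_nhdsWithin_iff.2 ⟨hto, ?_⟩)
    filter_upwards [Ioo_mem_nhdsGT one_pos] with ε hε
    exact subset_closure (hmem y hy ε ⟨hε.1, hε.2.le⟩)
  refine tendsto_nhds_unique_of_eventuallyEq (hlim _ hxv) (hlim x hx) ?_
  filter_upwards [Ioo_mem_nhdsGT one_pos] with ε hε
  have hshift : x + v + ε • (e - (x + v)) = x + ε • (e - x) + (1 - ε) • v := by module
  rw [hshift]
  refine hS.apply_add_eq_of_fderiv_apply_eq_zero hSo hf
    (fun z hz => by rw [map_smul, hv z hz, smul_zero]) (hmem x hx ε ⟨hε.1, hε.2.le⟩) ?_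
  exact hshift ▸ hmem _ hxv ε ⟨hε.1, hε.2.le⟩

end DirectionalConstancy

theorem mem_S1_iff {N : ℕ} {x : Fin N → ℝ × ℝ} :
    x ∈ S1 N ↔ ∀ j k : Fin N, j < k → |(x j).1 - (x k).1| < (x k).2 - (x j).2 := by
  have hsq : ∀ a b : ℝ, 0 < b → (a ^ 2 < b ^ 2 ↔ |a| < b) := fun a b hb => by
    rw [sq_lt_sq, abs_of_pos hb]
  constructor
  · rintro ⟨hlight, hord⟩ j k hjk
    have hpos := sub_pos.2 (hord j k hjk)
    rw [← hsq _ _ hpos]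
    simpa [sub_sq_comm ((x j).2)] using hlight j k hjk.ne
  · intro h
    have hord : ∀ j k : Fin N, j < k → (x j).2 < (x k).2 := fun j k hjk =>
      sub_pos.1 ((abs_nonneg _).trans_lt (h j k hjk))
    refine ⟨fun j k hjk => ?_, hord⟩
    rcases hjk.lt_or_gt with hjk | hkj
    · rw [← sub_sq_comm ((x k).2), hsq _ _ (sub_pos.2 (hord j k hjk))]
      exact h j k hjk
    · rw [sub_sq_comm ((x j).1), hsq _ _ (sub_pos.2 (hord k j hkj))]
      exact h k j hkj

theorem isOpen_S1 (N : ℕ) : IsOpen (S1 N) := by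
  have hS1 : S1 N = ⋂ j : Fin N, ⋂ k : Fin N, ⋂ _ : j < k,
      {x | |(x j).1 - (x k).1| < (x k).2 - (x j).2} := by
    ext x
    simp [mem_S1_iff]
  rw [hS1]
  exact isOpen_iInter_of_finite fun j => isOpen_iInter_of_finite fun k =>
    isOpen_iInter_of_finite fun _ => isOpen_lt (by fun_prop) (by fun_prop)

theorem convex_S1 (N : ℕ) : Convex ℝ (S1 N) := by
  refine convex_iff_forall_pos.2 fun x hx y hy a b ha hb _ => ?_
  rw [mem_S1_iff] at hx hy ⊢
  intro j k hjk
  obtain ⟨hx₁, hx₂⟩ := abs_lt.1 (hx j k hjk)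
  obtain ⟨hy₁, hy₂⟩ := abs_lt.1 (hy j k hjk)
  simp only [Pi.add_apply, Pi.smul_apply, Prod.fst_add, Prod.snd_add, Prod.smul_fst,
    Prod.smul_snd, smul_eq_mul]
  refine abs_lt.2 ⟨?_, ?_⟩ <;>
    linarith [mul_lt_mul_of_pos_left hx₁ ha, mul_lt_mul_of_pos_left hx₂ ha,
      mul_lt_mul_of_pos_left hy₁ hb, mul_lt_mul_of_pos_left hy₂ hb]

theorem mem_closure_S1_of_abs_le {N : ℕ} {x : Fin N → ℝ × ℝ}
    (hx : ∀ j k : Fin N, j < k → |(x j).1 - (x k).1| ≤ (x k).2 - (x j).2) :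
    x ∈ closure (S1 N) := by
  set e : Fin N → ℝ × ℝ := fun k => (0, (k : ℝ))
  have hmem : ∀ ε : ℝ, 0 < ε → x + ε • e ∈ S1 N := by
    intro ε hε
    rw [mem_S1_iff]
    intro j k hjk
    have hjk' : (j : ℝ) < k := by exact_mod_cast hjk
    simp only [e, Pi.add_apply, Pi.smul_apply, Prod.fst_add, Prod.snd_add, Prod.smul_fst,
      Prod.smul_snd, smul_eq_mul, mul_zero, add_zero]
    linarith [hx j k hjk, mul_pos hε (sub_pos.2 hjk')]
  have hto : Tendsto (fun ε : ℝ => x + ε • e) (𝓝[>] 0) (𝓝 x) :=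
    (Continuous.tendsto' (by fun_prop) 0 x (by simp)).mono_left nhdsWithin_le_nhds
  exact mem_closure_of_tendsto hto (eventually_nhdsWithin_of_forall hmem)

theorem Transport.fderiv_apply_eq_zero {N : ℕ} {s : Fin N → ℝ} {U : Set (Fin N → ℝ × ℝ)}
    {ψ : (Fin N → ℝ × ℝ) → ℂ} (hψ : Transport s U ψ) {x : Fin N → ℝ × ℝ} (hx : x ∈ U)
    (a : Fin N → ℝ) : fderiv ℝ ψ x (fun k => (a k, -(s k * a k))) = 0 := by
  rw [← Finset.univ_sum_single (fun k => (a k, -(s k * a k))), map_sum]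
  refine Finset.sum_eq_zero fun k _ => ?_
  have hsplit : (Pi.single k (a k, -(s k * a k)) : Fin N → ℝ × ℝ) =
      a k • (Pi.single k (1, 0) : Fin N → ℝ × ℝ) +
        (-(s k * a k)) • (Pi.single k (0, 1) : Fin N → ℝ × ℝ) := by
    rw [← Pi.single_smul, ← Pi.single_smul, ← Pi.single_add]
    simp
  rw [hsplit, map_add, map_smul, map_smul, hψ x hx k, smul_smul, ← add_smul,
    show a k * s k + -(s k * a k) = 0 by ring, zero_smul]

theorem stmt12_general (N : ℕ) (φ : ℕ → ℝ)
    (g : (Fin N → Bool) → (Fin N → ℝ) → ℂ)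
    (ψ : (Fin N → Bool) → (Fin N → ℝ × ℝ) → ℂ)
    (hψ : IsSolution N φ g ψ)
    (p : Fin N → ℝ × ℝ) (hp : p ∈ closure (S1 N)) (s : Fin N → Bool)
    (hc : ∀ i j : Fin N, i ≤ j →
      (p i).2 + sgn (s i) * (p i).1 ≤ (p j).2 + sgn (s j) * (p j).1) :
    ψ s p = g s (fun k => (p k).2 + sgn (s k) * (p k).1) := by
  obtain ⟨hcont, hdiff, htr, -, hinit⟩ := hψ
  set c : Fin N → ℝ := fun k => (p k).2 + sgn (s k) * (p k).1
  have hc₀ : (fun k => ((0 : ℝ), c k)) ∈ closure (S1 N) :=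
    mem_closure_S1_of_abs_le fun j k hjk => by simpa using hc j k hjk.le
  have hpc : (fun k => ((0 : ℝ), c k)) + (fun k => ((p k).1, -(sgn (s k) * (p k).1))) = p := by
    ext k <;> simp [c]
  have hconst := (convex_S1 N).apply_add_eq_of_fderiv_apply_eq_zero_of_mem_closure (isOpen_S1 N)
    ((hdiff s).differentiableOn one_ne_zero) (hcont s)
    (fun z hz => (htr s).fderiv_apply_eq_zero hz _) hc₀ (by rwa [hpc])
  rw [hpc] at hconst
  rw [hconst, hinit s c hc]

/-- no-collision case of the explicit solution formula: if `(ψ_s)` solves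
the initial-boundary value problem with data `g`, `p ∈ closure S₁`, and the
characteristic values `c_k = z_k + s_k t_k` of `p` w.r.t. `s` are nondecreasing, then
`ψ_s(p) = g_s(c₁,…,c_N)`. -/
theorem stmt12 (N : ℕ) (hN : 2 ≤ N) (φ : ℕ → ℝ)
    (g : (Fin N → Bool) → (Fin N → ℝ) → ℂ)
    (ψ : (Fin N → Bool) → (Fin N → ℝ × ℝ) → ℂ)
    (hψ : IsSolution N φ g ψ)
    (p : Fin N → ℝ × ℝ) (hp : p ∈ closure (S1 N)) (s : Fin N → Bool)
    (hc : ∀ i j : Fin N, i ≤ j →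
      (p i).2 + sgn (s i) * (p i).1 ≤ (p j).2 + sgn (s j) * (p j).1) :
    ψ s p = g s (fun k => (p k).2 + sgn (s k) * (p k).1) :=
  stmt12_general N φ g ψ hψ p hp s hc
end
end

section
/- Let φ ∈ ℝ and for (s_1,s_2) ∈ {−1,+1}² let g_{s_1 s_2} : {(z_1,z_2) ∈ ℝ² : z_1 ≤ z_2} → ℂ. Assume: (i) g_{++} and g_{−−} are restrictions of continuously differentiable functions on ℝ²; (ii) the functions G_{+−}, G_{−+} : ℝ² → ℂ defined by G_{+−}(c_1,c_2) := g_{+−}(c_1,c_2) for c_1 ≤ c_2 and G_{+−}(c_1,c_2) := e^{iφ} g_{−+}(c_2,c_1) for c_1 > c_2, and by G_{−+}(c_1,c_2) := g_{−+}(c_1,c_2) for c_1 ≤ c_2 and G_{−+}(c_1,c_2) := e^{−iφ} g_{+−}(c_2,c_1) for c_1 > c_2, are continuously differentiable on ℝ². Define on S̄_1 (with N = 2): ψ_{++}(t_1,z_1,t_2,z_2) := g_{++}(z_1+t_1, z_2+t_2), ψ_{−−}(t_1,z_1,t_2,z_2) := g_{−−}(z_1−t_1, z_2−t_2), ψ_{+−}(t_1,z_1,t_2,z_2)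 := G_{+−}(z_1+t_1, z_2−t_2), ψ_{−+}(t_1,z_1,t_2,z_2) := G_{−+}(z_1−t_1, z_2+t_2) (the first two are well defined since on S̄_1 one has z_1+t_1 ≤ z_2+t_2 and z_1−t_1 ≤ z_2−t_2). Then each ψ_{s_1 s_2} is continuous on S̄_1 and continuously differentiable on S_1, satisfies the multi-time transport equations for (s_1,s_2) on S_1, the boundary condition ψ_{+−}(p) = e^{iφ} ψ_{−+}(p) holds for every p ∈ C_{1,2}, and ψ_{s_1 s_2}(0,z_1,0,z_2) = g_{s_1 s_2}(z_1,z_2) for all z_1 ≤ z_2. (Existence and explicit solution of the two-particle model.) -/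
noncomputable section

/-- The coincidence set `C_{1,2}` for `N = 2`. -/
def C12 : Set (Fin 2 → ℝ × ℝ) :=
  {x ∈ closure (S1 2) | (x 0).1 = (x 1).1 ∧ (x 0).2 = (x 1).2}

/-! The four components are plane waves `g(z₁ + s₁ t₁, z₂ + s₂ t₂)` along the characteristics of
the transport operators, so they solve the transport equations wherever they are `C¹`
compositions. For `s₁ = s₂` the characteristic coordinates stay ordered on `S̄₁` (the two
particles are space-like separated), so only the values of `g_{±±}` on `{z₁ ≤ z₂}` matter. For
`s₁ ≠ s₂` the continuations satisfy `G_{+−}(c) = e^{iφ} G_{−+}(c₂, c₁)` off the diagonal by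
construction, hence everywhere by continuity, which on `C_{1,2}` is the boundary condition. -/

def charCoord (s : Fin 2 → ℝ) : (Fin 2 → ℝ × ℝ) →L[ℝ] ℝ × ℝ :=
  ((ContinuousLinearMap.snd ℝ ℝ ℝ + s 0 • ContinuousLinearMap.fst ℝ ℝ ℝ).comp
      (ContinuousLinearMap.proj 0)).prod
    ((ContinuousLinearMap.snd ℝ ℝ ℝ + s 1 • ContinuousLinearMap.fst ℝ ℝ ℝ).comp
      (ContinuousLinearMap.proj 1))

@[simp] lemma charCoord_apply (s : Fin 2 → ℝ) (x : Fin 2 → ℝ × ℝ) :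
    charCoord s x = ((x 0).2 + s 0 * (x 0).1, (x 1).2 + s 1 * (x 1).1) := by
  simp [charCoord, smul_eq_mul]

lemma charCoord_single_time (s : Fin 2 → ℝ) (k : Fin 2) :
    charCoord s (Pi.single k (1, 0)) = s k • charCoord s (Pi.single k (0, 1)) := by
  fin_cases k <;> simp [Prod.smul_def]

lemma transport_of_eqOn_comp_charCoord {s : Fin 2 → ℝ} {U : Set (Fin 2 → ℝ × ℝ)}
    (hU : IsOpen U) {G : ℝ × ℝ → ℂ} (hG : Differentiable ℝ G) {ψ : (Fin 2 → ℝ × ℝ) → ℂ}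
    (hψ : Set.EqOn ψ (G ∘ charCoord s) U) : Transport s U ψ := by
  intro p hp k
  have hfderiv : fderiv ℝ ψ p = (fderiv ℝ G (charCoord s p)).comp (charCoord s) := by
    rw [(Filter.eventuallyEq_of_mem (hU.mem_nhds hp) hψ).fderiv_eq,
      fderiv_comp p (hG _) (charCoord s).differentiableAt, (charCoord s).fderiv]
  rw [hfderiv, ContinuousLinearMap.comp_apply, charCoord_single_time, map_smul]
  rfl

lemma isOpen_S1_two : IsOpen (S1 2) := by
  have hS1 : S1 2 = {x : Fin 2 → ℝ × ℝ | ((x 0).1 - (x 1).1) ^ 2 < ((x 0).2 - (x 1).2) ^ 2} ∩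
      {x | (x 0).2 < (x 1).2} := by
    ext x
    refine ⟨fun ⟨h₁, h₂⟩ => ⟨h₁ 0 1 (by decide), h₂ 0 1 (by decide)⟩, fun ⟨h₁, h₂⟩ => ⟨?_, ?_⟩⟩
    · intro j k hjk
      fin_cases j <;> fin_cases k <;> simp_all [sub_sq_comm (x 1).1, sub_sq_comm (x 1).2]
    · intro j k hjk
      fin_cases j <;> fin_cases k <;> simp_all
  rw [hS1]
  exact (isOpen_lt (by fun_prop) (by fun_prop)).inter (isOpen_lt (by fun_prop) (by fun_prop))

lemma closure_S1_two_subset {a : ℝ} (ha : |a| ≤ 1) :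
    closure (S1 2) ⊆ {x | (charCoord ![a, a] x).1 ≤ (charCoord ![a, a] x).2} := by
  refine closure_minimal (fun x ⟨h₁, h₂⟩ => ?_) (isClosed_le (by fun_prop) (by fun_prop))
  have hsep : |(x 0).1 - (x 1).1| < (x 1).2 - (x 0).2 := by
    have := sq_lt_sq.mp (h₁ 0 1 (by decide))
    rwa [abs_sub_comm (x 0).2, abs_of_pos (sub_pos.mpr (h₂ 0 1 (by decide)))] at this
  have hmul : a * ((x 0).1 - (x 1).1) ≤ |(x 0).1 - (x 1).1| :=
    (le_abs_self _).trans ((abs_mul _ _).trans_le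
      (mul_le_of_le_one_left (abs_nonneg _) ha))
  simp only [Set.mem_ofPred_eq, charCoord_apply, Matrix.cons_val_zero, Matrix.cons_val_one]
  nlinarith

lemma transport_solution_of_eqOn_comp {s : Fin 2 → ℝ} {G : ℝ × ℝ → ℂ} (hG : ContDiff ℝ 1 G)
    {ψ : (Fin 2 → ℝ × ℝ) → ℂ} (hψ : Set.EqOn ψ (G ∘ charCoord s) (closure (S1 2))) :
    ContinuousOn ψ (closure (S1 2)) ∧ ContDiffOn ℝ 1 ψ (S1 2) ∧ Transport s (S1 2) ψ := by
  have hψS1 := hψ.mono subset_closure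
  exact ⟨(hG.continuous.comp (charCoord s).continuous).continuousOn.congr hψ,
    (hG.comp (charCoord s).contDiff).contDiffOn.congr hψS1,
    transport_of_eqOn_comp_charCoord isOpen_S1_two (hG.differentiable one_ne_zero) hψS1⟩

lemma apply_diag_eq_of_forall_snd_lt {E : Type*} [TopologicalSpace E] [T2Space E] {f g : ℝ × ℝ → E}
    (hf : Continuous f) (hg : Continuous g) (h : ∀ c : ℝ × ℝ, c.2 < c.1 → f c = g c) (z : ℝ) :
    f (z, z) = g (z, z) := by
  have hline : Set.EqOn (fun r : ℝ => f (z + r, z)) (fun r => g (z + r, z)) (Set.Ioi 0) :=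
    fun r hr => h _ (lt_add_of_pos_right z hr)
  have h0 : (fun r : ℝ => f (z + r, z)) 0 = (fun r => g (z + r, z)) 0 :=
    hline.closure (by fun_prop) (by fun_prop) (closure_Ioi (0 : ℝ) ▸ Set.self_mem_Ici)
  simpa using h0

lemma eq_exp_mul_apply_swap (φ : ℝ) {gpm gmp Gpm Gmp : ℝ × ℝ → ℂ}
    (hGpm1 : ∀ c : ℝ × ℝ, c.1 ≤ c.2 → Gpm c = gpm c)
    (hGpm2 : ∀ c : ℝ × ℝ, c.2 < c.1 → Gpm c = Complex.exp (Complex.I * (φ : ℂ)) * gmp (c.2, c.1))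
    (hGmp1 : ∀ c : ℝ × ℝ, c.1 ≤ c.2 → Gmp c = gmp c)
    (hGmp2 : ∀ c : ℝ × ℝ, c.2 < c.1 → Gmp c = Complex.exp (-(Complex.I * (φ : ℂ))) * gpm (c.2, c.1))
    (hGpm : Continuous Gpm) (hGmp : Continuous Gmp) (c : ℝ × ℝ) :
    Gpm c = Complex.exp (Complex.I * (φ : ℂ)) * Gmp c.swap := by
  have hlt : ∀ c : ℝ × ℝ, c.2 < c.1 → Gpm c = Complex.exp (Complex.I * (φ : ℂ)) * Gmp c.swap :=
    fun c hc => by rw [hGpm2 c hc, hGmp1 c.swap hc.le, Prod.swap]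
  obtain ⟨c₁, c₂⟩ := c
  rcases lt_trichotomy c₁ c₂ with hc | rfl | hc
  · rw [hGpm1 _ hc.le, Prod.swap_prod_mk, hGmp2 _ hc, ← mul_assoc, ← Complex.exp_add,
      add_neg_cancel, Complex.exp_zero, one_mul]
  · exact apply_diag_eq_of_forall_snd_lt hGpm (by fun_prop) hlt c₁
  · exact hlt _ hc

/-- existence and explicit solution of the two-particle model: given
boundary phase `φ`, initial data `g_{±±}` (given on `{z₁ ≤ z₂}`, encoded as total
functions only constrained there) such that `g_{++}`, `g_{−−}` are restrictions of `C¹`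
functions `Gpp`, `Gmm`, and such that the case-defined continuations `Gpm`, `Gmp`
(`Gpm(c₁,c₂) = g_{+−}(c₁,c₂)` for `c₁ ≤ c₂`, `= e^{iφ} g_{−+}(c₂,c₁)` for `c₁ > c₂`; and
`Gmp(c₁,c₂) = g_{−+}(c₁,c₂)` for `c₁ ≤ c₂`, `= e^{−iφ} g_{+−}(c₂,c₁)` for `c₁ > c₂`) are
`C¹` on `ℝ²`, the functions
`ψ_{++}(t₁,z₁,t₂,z₂) = g_{++}(z₁+t₁, z₂+t₂)`, `ψ_{−−}(t₁,z₁,t₂,z₂) = g_{−−}(z₁−t₁, z₂−t₂)`,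
`ψ_{+−}(t₁,z₁,t₂,z₂) = Gpm(z₁+t₁, z₂−t₂)`, `ψ_{−+}(t₁,z₁,t₂,z₂) = Gmp(z₁−t₁, z₂+t₂)`
are continuous on the closure of `S₁`, `C¹` on `S₁`, satisfy the respective multi-time
transport equations on `S₁`, the boundary condition `ψ_{+−} = e^{iφ} ψ_{−+}` on `C_{1,2}`,
and the initial conditions. -/
theorem stmt14 (φ : ℝ) (gpp gpm gmp gmm Gpp Gmm Gpm Gmp : ℝ × ℝ → ℂ)
    (hGpp : ContDiff ℝ 1 Gpp) (hGmm : ContDiff ℝ 1 Gmm)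
    (hgppG : ∀ c : ℝ × ℝ, c.1 ≤ c.2 → gpp c = Gpp c)
    (hgmmG : ∀ c : ℝ × ℝ, c.1 ≤ c.2 → gmm c = Gmm c)
    (hGpm1 : ∀ c : ℝ × ℝ, c.1 ≤ c.2 → Gpm c = gpm c)
    (hGpm2 : ∀ c : ℝ × ℝ, c.2 < c.1 → Gpm c = Complex.exp (Complex.I * (φ : ℂ)) * gmp (c.2, c.1))
    (hGmp1 : ∀ c : ℝ × ℝ, c.1 ≤ c.2 → Gmp c = gmp c)
    (hGmp2 : ∀ c : ℝ × ℝ, c.2 < c.1 → Gmp c = Complex.exp (-(Complex.I * (φ : ℂ))) * gpm (c.2, c.1))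
    (hGpm : ContDiff ℝ 1 Gpm) (hGmp : ContDiff ℝ 1 Gmp)
    (ψpp ψpm ψmp ψmm : (Fin 2 → ℝ × ℝ) → ℂ)
    (hψpp : ∀ x : Fin 2 → ℝ × ℝ, ψpp x = gpp ((x 0).2 + (x 0).1, (x 1).2 + (x 1).1))
    (hψmm : ∀ x : Fin 2 → ℝ × ℝ, ψmm x = gmm ((x 0).2 - (x 0).1, (x 1).2 - (x 1).1))
    (hψpm : ∀ x : Fin 2 → ℝ × ℝ, ψpm x = Gpm ((x 0).2 + (x 0).1, (x 1).2 - (x 1).1))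
    (hψmp : ∀ x : Fin 2 → ℝ × ℝ, ψmp x = Gmp ((x 0).2 - (x 0).1, (x 1).2 + (x 1).1)) :
    (ContinuousOn ψpp (closure (S1 2)) ∧ ContDiffOn ℝ 1 ψpp (S1 2) ∧
      Transport ![(1 : ℝ), 1] (S1 2) ψpp) ∧
    (ContinuousOn ψmm (closure (S1 2)) ∧ ContDiffOn ℝ 1 ψmm (S1 2) ∧
      Transport ![(-1 : ℝ), -1] (S1 2) ψmm) ∧
    (ContinuousOn ψpm (closure (S1 2)) ∧ ContDiffOn ℝ 1 ψpm (S1 2) ∧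
      Transport ![(1 : ℝ), -1] (S1 2) ψpm) ∧
    (ContinuousOn ψmp (closure (S1 2)) ∧ ContDiffOn ℝ 1 ψmp (S1 2) ∧
      Transport ![(-1 : ℝ), 1] (S1 2) ψmp) ∧
    (∀ p ∈ C12, ψpm p = Complex.exp (Complex.I * (φ : ℂ)) * ψmp p) ∧
    (∀ z1 z2 : ℝ, z1 ≤ z2 →
      ψpp ![((0 : ℝ), z1), ((0 : ℝ), z2)] = gpp (z1, z2) ∧
      ψpm ![((0 : ℝ), z1), ((0 : ℝ), z2)] = gpm (z1, z2) ∧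
      ψmp ![((0 : ℝ), z1), ((0 : ℝ), z2)] = gmp (z1, z2) ∧
      ψmm ![((0 : ℝ), z1), ((0 : ℝ), z2)] = gmm (z1, z2)) := by
  have hpp : Set.EqOn ψpp (Gpp ∘ charCoord ![1, 1]) (closure (S1 2)) := fun x hx => by
    have hord := closure_S1_two_subset (a := 1) (by norm_num) hx
    simp only [Set.mem_ofPred_eq, charCoord_apply] at hord
    rw [hψpp, Function.comp_apply, ← hgppG _ (by simpa using hord)]
    simp
  have hmm : Set.EqOn ψmm (Gmm ∘ charCoord ![-1, -1]) (closure (S1 2)) := fun x hx => by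
    have hord := closure_S1_two_subset (a := -1) (by norm_num) hx
    simp only [Set.mem_ofPred_eq, charCoord_apply] at hord
    rw [hψmm, Function.comp_apply, ← hgmmG _ (by simpa [sub_eq_add_neg] using hord)]
    simp [sub_eq_add_neg]
  have hpm : Set.EqOn ψpm (Gpm ∘ charCoord ![1, -1]) (closure (S1 2)) := fun x _ => by
    simp [hψpm, sub_eq_add_neg]
  have hmp : Set.EqOn ψmp (Gmp ∘ charCoord ![-1, 1]) (closure (S1 2)) := fun x _ => by
    simp [hψmp, sub_eq_add_neg]
  refine ⟨transport_solution_of_eqOn_comp hGpp hpp, transport_solution_of_eqOn_comp hGmm hmm,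
    transport_solution_of_eqOn_comp hGpm hpm, transport_solution_of_eqOn_comp hGmp hmp,
    fun p ⟨_, ht, hz⟩ => ?_, fun z₁ z₂ hz => ?_⟩
  · rw [hψpm, hψmp, ht, hz]
    exact eq_exp_mul_apply_swap φ hGpm1 hGpm2 hGmp1 hGmp2 hGpm.continuous hGmp.continuous _
  · refine ⟨by simp [hψpp], ?_, ?_, by simp [hψmm]⟩
    · simpa [hψpm] using hGpm1 (z₁, z₂) hz
    · simpa [hψmp] using hGmp1 (z₁, z₂) hz
end
end
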